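/- Let Σ be a Fano fan of rank 3 (i.e., a finite complete nonsingular fan in a rank-3 lattice with deg P > 0 for every primitive collection P) whose Picard number #G(Σ) − 3 is at least 2. Then there exists a primitive collection P ∈ PC(Σ) with #P = 2. -/

import Mathlib

noncomputable section

open Finset

/-- The real vector space `N_ℝ` for the lattice `N = ℤ^d`. -/
abbrev NR (d : ℕ) := Fin d → ℝ

/-- The canonical map from the lattice `N = ℤ^d` to `N_ℝ`. -/
def toNR {d : ℕ} (x : Fin d → ℤ) : NR d := fun i => (x i : ℝ)

/-- The convex cone generated by a set: all finite nonnegative real combinations. -/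
def coneOf {d : ℕ} (S : Set (NR d)) : Set (NR d) :=
  { y | ∃ (n : ℕ) (c : Fin n → ℝ) (v : Fin n → NR d),
      (∀ i, 0 ≤ c i) ∧ (∀ i, v i ∈ S) ∧ y = ∑ i, c i • v i }

/-- `τ` is a face of the cone `σ`, cut out by a linear functional nonnegative on `σ`. -/
def IsFaceOf {d : ℕ} (τ σ : Set (NR d)) : Prop :=
  ∃ u : NR d →ₗ[ℝ] ℝ, (∀ x ∈ σ, 0 ≤ u x) ∧ τ = {x ∈ σ | u x = 0}

/-- A rational polyhedral cone: generated by finitely many lattice points. -/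
def IsRationalPolyhedralCone {d : ℕ} (σ : Set (NR d)) : Prop :=
  ∃ S : Finset (Fin d → ℤ), σ = coneOf (toNR '' (↑S : Set (Fin d → ℤ)))

/-- A pointed (strongly convex) cone. -/
def IsPointedCone {d : ℕ} (σ : Set (NR d)) : Prop :=
  ∀ x ∈ σ, -x ∈ σ → x = 0

/-- A primitive lattice vector. -/
def IsPrimitive {d : ℕ} (x : Fin d → ℤ) : Prop :=
  x ≠ 0 ∧ ∀ (k : ℤ) (y : Fin d → ℤ), x = k • y → k = 1 ∨ k = -1

/-- The dimension of a cone. -/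
def coneDim {d : ℕ} (σ : Set (NR d)) : ℕ :=
  Module.finrank ℝ ↥(Submodule.span ℝ σ)

/-- A (finite) fan in `N = ℤ^d`: a finite collection of rational pointed polyhedral
cones, closed under taking faces, such that the intersection of any two cones is a
face of each. -/
structure Fan (d : ℕ) where
  cones : Set (Set (NR d))
  finite : cones.Finite
  rational : ∀ σ ∈ cones, IsRationalPolyhedralCone σ
  pointed : ∀ σ ∈ cones, IsPointedCone σ
  face_mem : ∀ σ ∈ cones, ∀ τ : Set (NR d), IsFaceOf τ σ → τ ∈ cones
  inter_face : ∀ σ ∈ cones, ∀ τ ∈ cones, IsFaceOf (σ ∩ τ) σ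

namespace Fan

variable {d : ℕ}

/-- A complete fan. -/
def IsComplete (F : Fan d) : Prop := ⋃₀ F.cones = Set.univ

/-- A simplicial fan: every cone is generated by linearly independent vectors. -/
def IsSimplicial (F : Fan d) : Prop :=
  ∀ σ ∈ F.cones, ∃ S : Finset (Fin d → ℤ),
    LinearIndependent ℝ (fun v : ↥(toNR '' (↑S : Set (Fin d → ℤ))) => (v : NR d)) ∧
    σ = coneOf (toNR '' (↑S : Set (Fin d → ℤ)))

/-- A nonsingular fan: every cone is generated by part of a `ℤ`-basis of `N`. -/
def IsNonsingular (F : Fan d) : Prop :=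
  ∀ σ ∈ F.cones, ∃ (b : Module.Basis (Fin d) ℤ (Fin d → ℤ)) (t : Set (Fin d)),
    σ = coneOf (toNR '' (⇑b '' t))

/-- `G(Σ)`: the set of primitive generators of the rays of a fan. -/
def genSet (F : Fan d) : Set (Fin d → ℤ) :=
  { x | IsPrimitive x ∧ coneOf {toNR x} ∈ F.cones }

/-- `G(σ) = σ ∩ G(Σ)`. -/
def coneGens (F : Fan d) (σ : Set (NR d)) : Set (Fin d → ℤ) :=
  { x ∈ F.genSet | toNR x ∈ σ }

/-- A primitive collection of a fan. -/
def IsPrimitiveCollection (F : Fan d) (P : Finset (Fin d → ℤ)) : Prop :=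
  P.Nonempty ∧ (↑P : Set (Fin d → ℤ)) ⊆ F.genSet ∧
    coneOf (toNR '' (↑P : Set (Fin d → ℤ))) ∉ F.cones ∧
    ∀ x ∈ P, coneOf (toNR '' ((↑P : Set (Fin d → ℤ)) \ {x})) ∈ F.cones

/-- `IsPrimRel F P Y a`: `P` is a primitive collection of `F` whose primitive relation is
`∑_{x ∈ P} x = ∑_{y ∈ Y} (a y) • y`, where `Y = G(σ(P))` and `σ(P)` is the unique cone
whose relative interior contains `∑_{x ∈ P} x`, and the coefficients `a y` are positive. -/
def IsPrimRel (F : Fan d) (P Y : Finset (Fin d → ℤ)) (a : (Fin d → ℤ) → ℤ) : Prop :=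
  F.IsPrimitiveCollection P ∧
  ∃ σ ∈ F.cones, (↑Y : Set (Fin d → ℤ)) = F.coneGens σ ∧
    toNR (∑ x ∈ P, x) ∈ intrinsicInterior ℝ σ ∧
    (∀ y ∈ Y, 0 < a y) ∧ (∑ x ∈ P, x) = ∑ y ∈ Y, a y • y

/-- A Fano fan: a finite complete nonsingular fan with `deg P > 0` for every
primitive collection `P` (so its toric variety is a nonsingular toric Fano `d`-fold). -/
def IsFanoFan (F : Fan d) : Prop :=
  F.IsComplete ∧ F.IsNonsingular ∧
    ∀ P Y a, F.IsPrimRel P Y a → ∑ y ∈ Y, a y < (P.card : ℤ)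

/-- The collection of cones of the star subdivision of `F` along `(σ, x)`. -/
def starSub (F : Fan d) (σ : Set (NR d)) (x : Fin d → ℤ) : Set (Set (NR d)) :=
  { τ ∈ F.cones | ¬ IsFaceOf σ τ } ∪
  { ρ | ∃ τ ∈ F.cones, IsFaceOf σ τ ∧ ∃ xi ∈ F.coneGens σ,
      IsFaceOf ρ (coneOf (toNR ''
        (insert x ((F.coneGens τ \ F.coneGens σ) ∪ (F.coneGens σ \ {xi}))))) }

/-- `F'` is the star subdivision of `F` along `(σ, x)`. -/
def IsStarSubdivisionOf (F' F : Fan d) (σ : Set (NR d)) (x : Fin d → ℤ) : Prop :=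
  F'.cones = F.starSub σ x

/-- `F'` is an equivariant blow-up of `F`: the star subdivision along a cone `σ` (with at
least two generators) and the sum of the elements of `G(σ)`. -/
def IsBlowupOf (F' F : Fan d) : Prop :=
  ∃ σ ∈ F.cones, ∃ S : Finset (Fin d → ℤ),
    (↑S : Set (Fin d → ℤ)) = F.coneGens σ ∧ 2 ≤ S.card ∧
    F'.IsStarSubdivisionOf F σ (∑ y ∈ S, y)

/-- One step of F-equivalence: an equivariant blow-up or blow-down between Fano fans. -/
def FStep (F G : Fan d) : Prop :=
  F.IsFanoFan ∧ G.IsFanoFan ∧ (G.IsBlowupOf F ∨ F.IsBlowupOf G)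

/-- F-equivalence of Fano fans. -/
def FEquiv : Fan d → Fan d → Prop := Relation.ReflTransGen FStep

/-- A splitting fan: any two distinct primitive collections are disjoint. -/
def IsSplittingFan (F : Fan d) : Prop :=
  F.IsComplete ∧ F.IsNonsingular ∧
    ∀ P Q, F.IsPrimitiveCollection P → F.IsPrimitiveCollection Q → P ≠ Q →
      ∀ x ∈ P, x ∉ Q

/-- Data of a wall relation: `τ` is a wall (a `(d-1)`-dimensional cone) with
`G(τ) = Z`, `z_d = zd`, `z_{d+1} = zd1` the generators of the two maximal cones
containing `τ`, and `∑_{z ∈ Z} (b z) • z + zd + zd1 = 0`.  The anticanonical degree of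
the corresponding invariant curve is `∑_{z ∈ Z} b z + 2`. -/
def IsWallRel (F : Fan d) (τ : Set (NR d)) (Z : Finset (Fin d → ℤ))
    (zd zd1 : Fin d → ℤ) (b : (Fin d → ℤ) → ℤ) : Prop :=
  τ ∈ F.cones ∧ coneDim τ = d - 1 ∧ (↑Z : Set (Fin d → ℤ)) = F.coneGens τ ∧
    zd ∈ F.genSet ∧ zd1 ∈ F.genSet ∧ zd ≠ zd1 ∧ zd ∉ Z ∧ zd1 ∉ Z ∧
    coneOf (toNR '' (insert zd (↑Z : Set (Fin d → ℤ)))) ∈ F.cones ∧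
    coneOf (toNR '' (insert zd1 (↑Z : Set (Fin d → ℤ)))) ∈ F.cones ∧
    (∑ z ∈ Z, b z • z) + zd + zd1 = 0

end Fan

/-- The fan of a product of projective spaces `P^{a 0} × ⋯ × P^{a (r-1)}`. -/
def IsProdProjFan {d r : ℕ} (F : Fan d) (a : Fin r → ℕ) : Prop :=
  ∃ e : (j : Fin r) → Fin (a j + 1) → (Fin d → ℤ),
    (∀ j, ∑ i, e j i = 0) ∧
    (∃ b : Module.Basis ((j : Fin r) × Fin (a j)) ℤ (Fin d → ℤ),
       ∀ (j : Fin r) (i : Fin (a j)), e j i.castSucc = b ⟨j, i⟩) ∧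
    F.cones = { σ | ∃ s : (j : Fin r) → Finset (Fin (a j + 1)),
        (∀ j, s j ≠ Finset.univ) ∧
        σ = coneOf (toNR '' (⋃ j, (e j) '' (↑(s j) : Set (Fin (a j + 1))))) }

/-- The fan of the projective space `P^d`. -/
def IsProjFan {d : ℕ} (F : Fan d) : Prop := IsProdProjFan F (fun _ : Fin 1 => d)

/-- The lattice points of `N_ℝ`. -/
def latticePts (d : ℕ) : Set (NR d) := Set.range (toNR (d := d))

/-- `F` is, up to a unimodular identification, the product of the fans `F₁` and `F₂`. -/
def IsProductOf {d d₁ d₂ : ℕ} (F : Fan d) (F₁ : Fan d₁) (F₂ : Fan d₂) : Prop :=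
  ∃ φ : NR d ≃ₗ[ℝ] NR d₁ × NR d₂,
    (⇑φ '' latticePts d = (latticePts d₁) ×ˢ (latticePts d₂)) ∧
    F.cones = { σ | ∃ σ₁ ∈ F₁.cones, ∃ σ₂ ∈ F₂.cones, ⇑φ '' σ = σ₁ ×ˢ σ₂ }

/-- `δ` is a nonempty proper face of the polytope `Δ`. -/
def IsProperPolytopeFace {d : ℕ} (δ Δ : Set (NR d)) : Prop :=
  δ.Nonempty ∧ δ ≠ Δ ∧ ∃ (u : NR d →ₗ[ℝ] ℝ) (c : ℝ),
    (∀ x ∈ Δ, u x ≤ c) ∧ δ = {x ∈ Δ | u x = c}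

/-- The collection of cones over the proper faces of the polytope `Conv(V)`
(together with the zero cone). -/
def polytopeFaceFan {d : ℕ} (V : Set (NR d)) : Set (Set (NR d)) :=
  insert ({0} : Set (NR d))
    { σ | ∃ δ : Set (NR d), IsProperPolytopeFace δ (convexHull ℝ V) ∧ σ = coneOf δ }

/-- The four-dimensional del Pezzo fan `V⁴` (up to unimodular equivalence). -/
def IsDelPezzoFan4 (F : Fan 4) : Prop :=
  ∃ b : Module.Basis (Fin 4) ℤ (Fin 4 → ℤ),
    F.cones = polytopeFaceFan (toNR ''
      ((Set.range ⇑b) ∪ (Set.range fun i => -b i) ∪ {(∑ i, b i), -(∑ i, b i)}))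

/-- The four-dimensional pseudo del Pezzo fan `Ṽ⁴` (up to unimodular equivalence). -/
def IsPseudoDelPezzoFan4 (F : Fan 4) : Prop :=
  ∃ b : Module.Basis (Fin 4) ℤ (Fin 4 → ℤ),
    F.cones = polytopeFaceFan (toNR ''
      ((Set.range ⇑b) ∪ (Set.range fun i => -b i) ∪ {∑ i, b i}))

/-- An equivariant blow-up of a 3-dimensional fan at an invariant point: star subdivision
along a 3-dimensional cone and the sum of its three generators. -/
def PointBlowup3 (F' F : Fan 3) : Prop :=
  ∃ σ ∈ F.cones, ∃ S : Finset (Fin 3 → ℤ),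
    (↑S : Set (Fin 3 → ℤ)) = F.coneGens σ ∧ S.card = 3 ∧
    F'.IsStarSubdivisionOf F σ (∑ y ∈ S, y)

/-- An equivariant blow-up of a 3-dimensional fan along an invariant curve: star
subdivision along a 2-dimensional cone and the sum of its two generators. -/
def CurveBlowup3 (F' F : Fan 3) : Prop :=
  ∃ σ ∈ F.cones, ∃ S : Finset (Fin 3 → ℤ),
    (↑S : Set (Fin 3 → ℤ)) = F.coneGens σ ∧ S.card = 2 ∧
    F'.IsStarSubdivisionOf F σ (∑ y ∈ S, y)

/-!
If no two rays formed a primitive collection, any two rays would span a cone of the fan, and two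
such cones on disjoint pairs of rays would meet only in `0`, their intersection being a face of
both. Writing `-E` in the nonsingular cone containing it gives a positive relation among `k ≤ 4`
generators spanning a space of dimension `k - 1`. Pointedness excludes `k ≤ 2`. For `k = 3`, two
generators on opposite sides of the plane of the relation span a cone meeting that plane in the
cone over two of the three. For `k = 4`, a fifth generator `E'` lies in the cone over three of
the four, and pushing it along the fourth, `D`, shows that the cone over `E', D` meets the cone
over two of the others. This is the non-planarity of `K₅` for the triangulation of the sphere
cut out by the fan.
-/

open Module Submodule
open scoped NNReal

variable {d : ℕ}

lemma coneOf_eq_span (S : Set (NR d)) : coneOf S = (span ℝ≥0 S : Set (NR d)) := by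
  ext y
  rw [SetLike.mem_coe, mem_span_set']
  constructor
  · rintro ⟨n, c, v, hc, hv, rfl⟩
    exact ⟨n, fun i => ⟨c i, hc i⟩, fun i => ⟨v i, hv i⟩, rfl⟩
  · rintro ⟨n, c, v, rfl⟩
    exact ⟨n, fun i => c i, fun i => v i, fun i => (c i).2, fun i => (v i).2,
      by simp [NNReal.smul_def]⟩

lemma subset_coneOf (S : Set (NR d)) : S ⊆ coneOf S := by
  rw [coneOf_eq_span]
  exact subset_span

lemma coneOf_subset_coneOf {S T : Set (NR d)} (h : S ⊆ coneOf T) : coneOf S ⊆ coneOf T := by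
  simp only [coneOf_eq_span] at h ⊢
  exact SetLike.coe_subset_coe.2 (span_le.2 h)

lemma smul_add_smul_mem_coneOf_pair {x y : NR d} {α β : ℝ} (hα : 0 ≤ α) (hβ : 0 ≤ β) :
    α • x + β • y ∈ coneOf {x, y} := by
  rw [coneOf_eq_span, SetLike.mem_coe, mem_span_pair]
  exact ⟨⟨α, hα⟩, ⟨β, hβ⟩, rfl⟩

lemma exists_eq_smul_of_mem_coneOf_singleton {x z : NR d} (hz : z ∈ coneOf {x}) :
    ∃ r : ℝ, 0 ≤ r ∧ z = r • x := by
  rw [coneOf_eq_span, SetLike.mem_coe, mem_span_singleton] at hz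
  obtain ⟨r, rfl⟩ := hz
  exact ⟨r, r.2, rfl⟩

lemma exists_eq_smul_add_smul_of_mem_coneOf_pair {x y z : NR d} (hz : z ∈ coneOf {x, y}) :
    ∃ α β : ℝ, 0 ≤ α ∧ 0 ≤ β ∧ z = α • x + β • y := by
  rw [coneOf_eq_span, SetLike.mem_coe, mem_span_pair] at hz
  obtain ⟨α, β, rfl⟩ := hz
  exact ⟨α, β, α.2, β.2, rfl⟩

lemma IsFaceOf.mem_or_mem_of_ne_zero {τ : Set (NR d)} {x y z : NR d}
    (h : IsFaceOf τ (coneOf {x, y})) (hz : z ∈ τ) (hz0 : z ≠ 0) : x ∈ τ ∨ y ∈ τ := by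
  obtain ⟨u, hu, rfl⟩ := h
  obtain ⟨hzσ, huz⟩ := hz
  obtain ⟨α, β, hα, hβ, rfl⟩ := exists_eq_smul_add_smul_of_mem_coneOf_pair hzσ
  have hux := hu x (subset_coneOf _ (by simp))
  have huy := hu y (subset_coneOf _ (by simp))
  simp only [map_add, map_smul, smul_eq_mul] at huz
  rcases hα.eq_or_lt with rfl | hα
  · have hβ : 0 < β := hβ.lt_of_ne (by rintro rfl; simp at hz0)
    exact Or.inr ⟨subset_coneOf _ (by simp), by nlinarith⟩
  · exact Or.inl ⟨subset_coneOf _ (by simp), by nlinarith [mul_nonneg hβ huy]⟩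

lemma IsPrimitive.toNR_ne_zero {x : Fin d → ℤ} (hx : IsPrimitive x) : toNR x ≠ 0 := fun h =>
  hx.1 (funext fun i => by simpa [toNR] using congrFun h i)

lemma IsPrimitive.eq_or_eq_neg_of_smul_eq_smul {x y : Fin d → ℤ} (hx : IsPrimitive x)
    (hy : IsPrimitive y) {m n : ℤ} (hm : m ≠ 0) (h : m • y = n • x) : y = x ∨ y = -x := by
  obtain ⟨g, m, n, hg, hmn, rfl, rfl⟩ := Int.exists_gcd_one' (Int.gcd_pos_of_ne_zero_left n hm)
  have h : m • y = n • x := by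
    rw [mul_comm, mul_smul, mul_comm, mul_smul] at h
    exact smul_right_injective _ (by exact_mod_cast hg.ne') h
  obtain ⟨a, b, hab⟩ := Int.isCoprime_iff_gcd_eq_one.2 hmn
  set w := a • x + b • y
  have hxw : x = m • w := by linear_combination (norm := module) -(b • h) - hab • x
  have hyw : y = n • w := by linear_combination (norm := module) a • h - hab • y
  rcases hx.2 m w hxw with rfl | rfl <;> rcases hy.2 n w hyw with rfl | rfl <;> simp_all

lemma IsPrimitive.eq_of_toNR_eq_smul {x y : Fin d → ℤ} (hx : IsPrimitive x) (hy : IsPrimitive y)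
    {μ : ℝ} (hμ : 0 < μ) (h : toNR y = μ • toNR x) : y = x := by
  obtain ⟨j, hj⟩ : ∃ j, x j ≠ 0 := by
    by_contra! h0
    exact hx.1 (funext h0)
  have hxy : x j • y = y j • x := by
    funext i
    have hi := congrFun h i
    have hj := congrFun h j
    simp only [toNR, Pi.smul_apply, smul_eq_mul] at hi hj ⊢
    exact_mod_cast (by rw [hi, hj]; ring : (x j : ℝ) * y i = y j * x i)
  refine (hx.eq_or_eq_neg_of_smul_eq_smul hy hj hxy).resolve_right ?_
  rintro rfl
  have : (1 + μ) • toNR x = 0 := by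
    rw [add_smul, one_smul, ← h]
    ext i
    simp [toNR]
  exact hx.toNR_ne_zero ((smul_eq_zero.1 this).resolve_left (by positivity))

lemma IsPrimitive.eq_of_toNR_mem_coneOf_singleton {x y : Fin d → ℤ} (hx : IsPrimitive x)
    (hy : IsPrimitive y) (h : toNR y ∈ coneOf {toNR x}) : y = x := by
  obtain ⟨r, hr, hyx⟩ := exists_eq_smul_of_mem_coneOf_singleton h
  refine hx.eq_of_toNR_eq_smul hy (hr.lt_of_ne ?_) hyx
  rintro rfl
  exact hy.toNR_ne_zero (by simpa using hyx)

lemma Module.Basis.isPrimitive {ι : Type*} (b : Basis ι ℤ (Fin d → ℤ)) (i : ι) :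
    IsPrimitive (b i) := by
  refine ⟨b.ne_zero i, fun k y h => Int.isUnit_iff.1 (IsUnit.of_mul_eq_one (b.repr y i) ?_)⟩
  rw [← smul_eq_mul, ← Finsupp.smul_apply, ← map_smul, ← h]
  simp

lemma toNR_eq_sum_repr {ι : Type*} [Fintype ι] (b : Basis ι ℤ (Fin d → ℤ)) (m : Fin d → ℤ) :
    toNR m = ∑ i, (b.repr m i : ℝ) • toNR (b i) := by
  conv_lhs => rw [← b.sum_repr m]
  ext k
  simp [toNR, Finset.sum_apply]

lemma Module.Basis.exists_coe_eq_toNR_comp (b : Basis (Fin d) ℤ (Fin d → ℤ)) :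
    ∃ B : Basis (Fin d) ℝ (NR d), ⇑B = toNR ∘ b := by
  have hspan : ⊤ ≤ span ℝ (Set.range (toNR ∘ b)) := by
    rintro x -
    rw [pi_eq_sum_univ x]
    refine sum_mem fun k _ => smul_mem _ _ ?_
    have : (fun j => if k = j then (1 : ℝ) else 0) = toNR (Pi.single k 1) := by
      ext j
      by_cases h : k = j <;> simp [toNR, h, eq_comm]
    rw [this, toNR_eq_sum_repr b]
    exact sum_mem fun j _ => smul_mem _ _ (subset_span ⟨j, rfl⟩)
  exact ⟨basisOfTopLeSpanOfCardEqFinrank _ hspan (by simp),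
    coe_basisOfTopLeSpanOfCardEqFinrank _ hspan _⟩

section SimplicialCone

variable {ι : Type*} [Fintype ι] (B : Basis ι ℝ (NR d))

lemma mem_coneOf_image_basis_iff (t : Set ι) {x : NR d} :
    x ∈ coneOf (B '' t) ↔ ∀ i, 0 ≤ B.repr x i ∧ (i ∉ t → B.repr x i = 0) := by
  rw [coneOf_eq_span, SetLike.mem_coe]
  constructor
  · intro hx
    induction hx using span_induction with
    | mem y hy =>
      obtain ⟨j, hj, rfl⟩ := hy
      intro i
      by_cases hij : i = j
      · simp [hij, hj]
      · simp [Ne.symm hij]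
    | zero => simp
    | add y z _ _ hy hz =>
      intro i
      simp only [map_add, Finsupp.add_apply]
      exact ⟨add_nonneg (hy i).1 (hz i).1, fun hi => by rw [(hy i).2 hi, (hz i).2 hi, add_zero]⟩
    | smul c y _ hy =>
      intro i
      simp only [NNReal.smul_def, map_smul, Finsupp.smul_apply, smul_eq_mul]
      exact ⟨mul_nonneg c.2 (hy i).1, fun hi => by rw [(hy i).2 hi, mul_zero]⟩
  · intro hx
    rw [← B.sum_repr x]
    refine sum_mem fun i _ => ?_
    by_cases hi : i ∈ t
    · exact smul_mem _ (⟨B.repr x i, (hx i).1⟩ : ℝ≥0) (subset_span ⟨i, hi, rfl⟩)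
    · simp [(hx i).2 hi]

lemma isFaceOf_coneOf_singleton_basis [DecidableEq ι] {t : Set ι} {i : ι} (hi : i ∈ t) :
    IsFaceOf (coneOf {B i}) (coneOf (B '' t)) := by
  refine ⟨∑ j ∈ Finset.univ.erase i, B.coord j, fun x hx => ?_, ?_⟩
  · simp only [LinearMap.sum_apply, Basis.coord_apply]
    exact Finset.sum_nonneg fun j _ => ((mem_coneOf_image_basis_iff B t).1 hx j).1
  ext x
  rw [← Set.image_singleton, Set.mem_ofPred_eq, mem_coneOf_image_basis_iff,
    mem_coneOf_image_basis_iff]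
  simp only [LinearMap.sum_apply, Basis.coord_apply, Set.mem_singleton_iff]
  constructor
  · intro hx
    refine ⟨fun j => ⟨(hx j).1, fun hj => (hx j).2 (ne_of_mem_of_not_mem hi hj).symm⟩, ?_⟩
    exact Finset.sum_eq_zero fun j hj => (hx j).2 (Finset.ne_of_mem_erase hj)
  · rintro ⟨hx, hsum⟩ j
    refine ⟨(hx j).1, fun hj => ?_⟩
    exact (Finset.sum_eq_zero_iff_of_nonneg fun k _ => (hx k).1).1 hsum j
      (Finset.mem_erase.2 ⟨hj, Finset.mem_univ j⟩)

end SimplicialCone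

lemma Submodule.exists_dual_ne_zero_ker_eq {K V : Type*} [Field K] [AddCommGroup V] [Module K V]
    [FiniteDimensional K V] (W : Submodule K V) (hW : finrank K W + 1 = finrank K V) :
    ∃ u : Dual K V, u ≠ 0 ∧ LinearMap.ker u = W := by
  have hlt : W < ⊤ := lt_top_iff_ne_top.2 fun h => by
    rw [h, finrank_top] at hW
    omega
  obtain ⟨u, hu, hle⟩ := W.exists_le_ker_of_lt_top hlt
  refine ⟨u, hu, (eq_of_le_of_finrank_le hle ?_).symm⟩
  have := Dual.finrank_ker_add_one_of_ne_zero hu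
  omega

/-- The witness is `τ = min c i / l i`: subtracting `τ • l` keeps `c` nonnegative on `s` and
kills it at the minimiser `j`. -/
lemma Finset.exists_sum_smul_eq_add_sum_erase {ι V : Type*} [DecidableEq ι] [AddCommGroup V]
    [Module ℝ V] {s : Finset ι} (hs : s.Nonempty) {l : ι → ℝ} (hl : ∀ i ∈ s, 0 < l i)
    (c : ι → ℝ) (v : ι → V) : ∃ j ∈ s, ∃ τ : ℝ, τ * l j = c j ∧ (∀ i ∈ s, τ * l i ≤ c i) ∧
      ∑ i ∈ s, c i • v i = τ • ∑ i ∈ s, l i • v i + ∑ i ∈ s.erase j, (c i - τ * l i) • v i := by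
  obtain ⟨j, hj, hmin⟩ := s.exists_min_image (fun i => c i / l i) hs
  have hτ : c j / l j * l j = c j := div_mul_cancel₀ _ (hl j hj).ne'
  refine ⟨j, hj, c j / l j, hτ, fun i hi => (le_div_iff₀ (hl i hi)).1 (hmin i hi), ?_⟩
  rw [Finset.sum_erase _ (by rw [hτ, sub_self, zero_smul]), Finset.smul_sum,
    ← Finset.sum_add_distrib]
  exact Finset.sum_congr rfl fun i _ => by rw [smul_smul, ← add_smul, add_sub_cancel]

namespace Fan

variable (F : Fan d)

lemma mem_genSet_of_basis {b : Basis (Fin d) ℤ (Fin d → ℤ)} {t : Set (Fin d)}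
    (hσ : coneOf (toNR '' (b '' t)) ∈ F.cones) {i : Fin d} (hi : i ∈ t) : b i ∈ F.genSet := by
  obtain ⟨B, hB⟩ := b.exists_coe_eq_toNR_comp
  rw [← Set.image_comp, ← hB] at hσ
  refine ⟨b.isPrimitive i, F.face_mem _ hσ _ ?_⟩
  rw [show toNR (b i) = B i by simp [hB]]
  classical
  exact isFaceOf_coneOf_singleton_basis B hi

lemma exists_linearIndepOn_sum_smul_eq (hC : F.IsComplete) (hN : F.IsNonsingular) (x : NR d) :
    ∃ s : Finset (Fin d → ℤ), ↑s ⊆ F.genSet ∧ LinearIndepOn ℝ toNR (s : Set (Fin d → ℤ)) ∧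
      ∃ c : (Fin d → ℤ) → ℝ, (∀ y ∈ s, 0 < c y) ∧ ∑ y ∈ s, c y • toNR y = x := by
  classical
  obtain ⟨σ, hσ, hxσ⟩ : x ∈ ⋃₀ F.cones := hC ▸ Set.mem_univ x
  obtain ⟨b, t, rfl⟩ := hN σ hσ
  obtain ⟨B, hB⟩ := b.exists_coe_eq_toNR_comp
  have hx : ∀ i, 0 ≤ B.repr x i ∧ (i ∉ t → B.repr x i = 0) := by
    rwa [← mem_coneOf_image_basis_iff, hB, Set.image_comp]
  set J := Finset.univ.filter fun i => 0 < B.repr x i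
  have hJt : ∀ i ∈ J, i ∈ t := fun i hi => by_contra fun hit =>
    (Finset.mem_filter.1 hi).2.ne' ((hx i).2 hit)
  refine ⟨J.image b, ?_, ?_, Function.extend b (B.repr x) 0, ?_, ?_⟩
  · simp only [Finset.coe_image, Set.image_subset_iff]
    exact fun i hi => F.mem_genSet_of_basis hσ (hJt i hi)
  · rw [Finset.coe_image]
    exact LinearIndepOn.image_of_comp _ _ (hB ▸ B.linearIndependent.linearIndepOn _)
  · simp only [Finset.mem_image, forall_exists_index, and_imp]
    rintro _ i hi rfl
    rw [b.injective.extend_apply]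
    exact (Finset.mem_filter.1 hi).2
  · calc ∑ y ∈ J.image b, Function.extend b (B.repr x) 0 y • toNR y
        = ∑ i ∈ J, B.repr x i • B i := by
          rw [Finset.sum_image fun i _ j _ h => b.injective h]
          simp [b.injective.extend_apply, hB]
      _ = x := by
          rw [Finset.sum_filter_of_ne fun i _ h => ?_, B.sum_repr]
          exact (hx i).1.lt_of_ne (left_ne_zero_of_smul h).symm

lemma exists_mem_genSet_apply_neg (hC : F.IsComplete) (hN : F.IsNonsingular) {u : Dual ℝ (NR d)}
    (hu : u ≠ 0) : ∃ g ∈ F.genSet, u (toNR g) < 0 := by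
  obtain ⟨x, hx⟩ : ∃ x, u x < 0 := by
    obtain ⟨x, hx⟩ := DFunLike.ne_iff.1 hu
    rcases (show u x ≠ 0 from hx).lt_or_gt with h | h
    · exact ⟨x, h⟩
    · exact ⟨-x, by simpa⟩
  obtain ⟨s, hsG, -, c, hc, rfl⟩ := F.exists_linearIndepOn_sum_smul_eq hC hN x
  simp only [map_sum, map_smul, smul_eq_mul] at hx
  obtain ⟨g, hg, hneg⟩ := Finset.exists_lt_of_sum_lt (hx.trans_eq Finset.sum_const_zero.symm)
  exact ⟨g, hsG hg, neg_of_mul_neg_right hneg (hc g hg).le⟩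

lemma exists_smul_add_smul_mem_of_finrank_add_one (hC : F.IsComplete) (hN : F.IsNonsingular)
    (W : Submodule ℝ (NR d)) (hW : finrank ℝ W + 1 = d) :
    ∃ p ∈ F.genSet, ∃ q ∈ F.genSet, toNR p ∉ W ∧ toNR q ∉ W ∧
      ∃ α β : ℝ, 0 < α ∧ 0 < β ∧ α • toNR p + β • toNR q ∈ W := by
  obtain ⟨u, hu, rfl⟩ := W.exists_dual_ne_zero_ker_eq (by simpa using hW)
  obtain ⟨p, hp, hup⟩ := F.exists_mem_genSet_apply_neg hC hN (neg_ne_zero.2 hu)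
  obtain ⟨q, hq, huq⟩ := F.exists_mem_genSet_apply_neg hC hN hu
  rw [LinearMap.neg_apply, neg_neg_iff_pos] at hup
  refine ⟨p, hp, q, hq, hup.ne', huq.ne, -u (toNR q), u (toNR p), by linarith, hup, ?_⟩
  simp only [LinearMap.mem_ker, map_add, map_smul, smul_eq_mul]
  ring

structure IsPositiveRelation (s : Finset (Fin d → ℤ)) (l : (Fin d → ℤ) → ℝ) : Prop where
  subset_genSet : ↑s ⊆ F.genSet
  pos : ∀ x ∈ s, 0 < l x
  sum_smul_eq_zero : ∑ x ∈ s, l x • toNR x = 0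

lemma exists_isPositiveRelation (hC : F.IsComplete) (hN : F.IsNonsingular)
    (hne : F.genSet.Nonempty) : ∃ s l, F.IsPositiveRelation s l ∧
      finrank ℝ (span ℝ (toNR '' (s : Set (Fin d → ℤ)))) + 1 = s.card := by
  classical
  obtain ⟨E, hE⟩ := hne
  obtain ⟨s, hsG, hind, c, hc, hsum⟩ := F.exists_linearIndepOn_sum_smul_eq hC hN (-toNR E)
  have hEs : E ∉ s := by
    intro hEs
    have hrel : ∑ y ∈ s, (c y + if y = E then 1 else 0) • toNR y = 0 := by
      simp [add_smul, Finset.sum_add_distrib, ite_smul, hEs, hsum]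
    have := linearIndepOn_finset_iff.1 hind _ hrel E hEs
    rw [if_pos rfl] at this
    linarith [hc E hEs]
  have hsE : ∀ y ∈ s, y ≠ E := fun y hy h => hEs (h ▸ hy)
  refine ⟨insert E s, Function.update c E 1, ⟨?_, ?_, ?_⟩, ?_⟩
  · rw [Finset.coe_insert]
    exact Set.insert_subset hE hsG
  · intro y hy
    rcases Finset.mem_insert.1 hy with rfl | hy
    · simp
    · simpa [hsE y hy] using hc y hy
  · rw [Finset.sum_insert hEs, Function.update_self, one_smul,
      Finset.sum_congr rfl fun y hy => by rw [Function.update_of_ne (hsE y hy)], hsum,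
      add_neg_cancel]
  · have hEspan : toNR E ∈ span ℝ (toNR '' (s : Set (Fin d → ℤ))) := by
      rw [← neg_neg (toNR E), ← hsum]
      exact neg_mem (sum_mem fun y hy => smul_mem _ _ (subset_span ⟨y, hy, rfl⟩))
    rw [Finset.coe_insert, Set.image_insert_eq, span_insert_eq_span hEspan,
      Finset.card_insert_of_notMem hEs, Set.image_eq_range, finrank_span_eq_card hind]
    simp

lemma IsPositiveRelation.exists_nonneg_sum_erase_eq {F : Fan d} {s : Finset (Fin d → ℤ)}
    {l : (Fin d → ℤ) → ℝ} (hrel : F.IsPositiveRelation s l) (hs : s.Nonempty) {z : NR d}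
    (hz : z ∈ span ℝ (toNR '' (s : Set (Fin d → ℤ)))) :
    ∃ j ∈ s, ∃ a : (Fin d → ℤ) → ℝ, (∀ x ∈ s, 0 ≤ a x) ∧ ∑ x ∈ s.erase j, a x • toNR x = z := by
  obtain ⟨c, rfl⟩ := (mem_span_image_finset_iff_exists_fun' ℝ).1 hz
  obtain ⟨j, hj, τ, -, hτ, hsum⟩ := s.exists_sum_smul_eq_add_sum_erase hs hrel.pos c toNR
  refine ⟨j, hj, fun x => c x - τ * l x, fun x hx => sub_nonneg.2 (hτ x hx), ?_⟩
  rw [hsum, hrel.sum_smul_eq_zero, smul_zero, zero_add]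

lemma eq_or_eq_of_toNR_mem_coneOf_pair {r s v : Fin d → ℤ} (hr : r ∈ F.genSet)
    (hs : s ∈ F.genSet) (hv : v ∈ F.genSet) (hC : coneOf {toNR r, toNR s} ∈ F.cones)
    (hmem : toNR v ∈ coneOf {toNR r, toNR s}) : v = r ∨ v = s := by
  have hface := F.inter_face _ hC _ hv.2
  rw [Set.inter_eq_right.2 (coneOf_subset_coneOf (Set.singleton_subset_iff.2 hmem))] at hface
  rcases hface.mem_or_mem_of_ne_zero (subset_coneOf _ rfl) hv.1.toNR_ne_zero with h | h
  · exact Or.inl (hv.1.eq_of_toNR_mem_coneOf_singleton hr.1 h).symm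
  · exact Or.inr (hv.1.eq_of_toNR_mem_coneOf_singleton hs.1 h).symm

lemma eq_zero_of_mem_coneOf_pair_of_mem_coneOf_pair {p q r t : Fin d → ℤ}
    (hp : p ∈ F.genSet) (hq : q ∈ F.genSet) (hr : r ∈ F.genSet) (ht : t ∈ F.genSet)
    (hpq : coneOf {toNR p, toNR q} ∈ F.cones) (hrt : coneOf {toNR r, toNR t} ∈ F.cones)
    (hpn : p ∉ ({r, t} : Finset (Fin d → ℤ))) (hqn : q ∉ ({r, t} : Finset (Fin d → ℤ)))
    {z : NR d} (hz₁ : z ∈ coneOf {toNR p, toNR q}) (hz₂ : z ∈ coneOf {toNR r, toNR t}) :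
    z = 0 := by
  by_contra hz
  rcases (F.inter_face _ hpq _ hrt).mem_or_mem_of_ne_zero ⟨hz₁, hz₂⟩ hz with h | h
  · exact hpn (by simpa using F.eq_or_eq_of_toNR_mem_coneOf_pair hr ht hp hrt h.2)
  · exact hqn (by simpa using F.eq_or_eq_of_toNR_mem_coneOf_pair hr ht hq hrt h.2)

def IsTwoNeighborly : Prop :=
  ∀ a ∈ F.genSet, ∀ b ∈ F.genSet, a ≠ b → coneOf {toNR a, toNR b} ∈ F.cones

lemma isPrimitiveCollection_pair {a b : Fin d → ℤ} (ha : a ∈ F.genSet) (hb : b ∈ F.genSet)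
    (hab : a ≠ b) (h : coneOf {toNR a, toNR b} ∉ F.cones) : F.IsPrimitiveCollection {a, b} := by
  refine ⟨by simp, by simp [Set.insert_subset_iff, ha, hb], by simpa [Set.image_pair] using h, ?_⟩
  simp only [Finset.mem_insert, Finset.mem_singleton, Finset.coe_pair]
  rintro x (rfl | rfl)
  · simpa [Set.pair_sdiff_left hab] using hb.2
  · simpa [Set.pair_sdiff_right hab] using ha.2

end Fan

namespace Fan.IsTwoNeighborly

variable {F : Fan d}

lemma coneOf_pair_mem (H : F.IsTwoNeighborly) {a b : Fin d → ℤ} (ha : a ∈ F.genSet)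
    (hb : b ∈ F.genSet) : coneOf {toNR a, toNR b} ∈ F.cones := by
  rcases eq_or_ne a b with rfl | hab
  · simpa using ha.2
  · exact H a ha b hb hab

lemma smul_add_smul_ne_zero (H : F.IsTwoNeighborly) {a b : Fin d → ℤ} (ha : a ∈ F.genSet)
    (hb : b ∈ F.genSet) {α β : ℝ} (hα : 0 < α) (hβ : 0 ≤ β) : α • toNR a + β • toNR b ≠ 0 := by
  intro h
  have hαa : α • toNR a ∈ coneOf {toNR a, toNR b} := by
    simpa using smul_add_smul_mem_coneOf_pair (x := toNR a) (y := toNR b) hα.le le_rfl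
  have hβb : -(α • toNR a) ∈ coneOf {toNR a, toNR b} := by
    simpa [neg_eq_of_add_eq_zero_right h] using
      smul_add_smul_mem_coneOf_pair (x := toNR a) (y := toNR b) le_rfl hβ
  have := F.pointed _ (H.coneOf_pair_mem ha hb) _ hαa hβb
  exact ha.1.toNR_ne_zero ((smul_eq_zero.1 this).resolve_left hα.ne')

lemma smul_add_smul_ne_smul_add_smul (H : F.IsTwoNeighborly) {p q r t : Fin d → ℤ}
    (hp : p ∈ F.genSet) (hq : q ∈ F.genSet) (hr : r ∈ F.genSet) (ht : t ∈ F.genSet)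
    (hpn : p ∉ ({r, t} : Finset (Fin d → ℤ))) (hqn : q ∉ ({r, t} : Finset (Fin d → ℤ)))
    {α β γ δ : ℝ} (hα : 0 < α) (hβ : 0 ≤ β) (hγ : 0 ≤ γ) (hδ : 0 ≤ δ) :
    α • toNR p + β • toNR q ≠ γ • toNR r + δ • toNR t := fun h =>
  H.smul_add_smul_ne_zero hp hq hα hβ <| F.eq_zero_of_mem_coneOf_pair_of_mem_coneOf_pair hp hq
    hr ht (H.coneOf_pair_mem hp hq) (H.coneOf_pair_mem hr ht) hpn hqn
    (smul_add_smul_mem_coneOf_pair hα.le hβ) (h ▸ smul_add_smul_mem_coneOf_pair hγ hδ)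

lemma three_le_card (H : F.IsTwoNeighborly) {s : Finset (Fin d → ℤ)} {l : (Fin d → ℤ) → ℝ}
    (hrel : F.IsPositiveRelation s l) (hs : s.Nonempty) : 3 ≤ s.card := by
  obtain ⟨hsG, hl, hsum⟩ := hrel
  by_contra! h3
  rcases (by have := hs.card_pos; omega : s.card = 1 ∨ s.card = 2) with h | h
  · obtain ⟨x, rfl⟩ := card_eq_one.1 h
    rw [sum_singleton] at hsum
    have hx : x ∈ F.genSet := hsG (by simp)
    exact hx.1.toNR_ne_zero ((smul_eq_zero.1 hsum).resolve_left (hl x (by simp)).ne')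
  · obtain ⟨x, y, hxy, rfl⟩ := card_eq_two.1 h
    rw [sum_pair hxy] at hsum
    exact H.smul_add_smul_ne_zero (hsG (by simp)) (hsG (by simp)) (hl x (by simp))
      (hl y (by simp)).le hsum

lemma smul_add_smul_notMem_span (H : F.IsTwoNeighborly) {s : Finset (Fin d → ℤ)}
    {l : (Fin d → ℤ) → ℝ} (hrel : F.IsPositiveRelation s l) (hs : s.card = 3)
    {p q : Fin d → ℤ} (hp : p ∈ F.genSet) (hq : q ∈ F.genSet) (hps : p ∉ s) (hqs : q ∉ s)
    {α β : ℝ} (hα : 0 < α) (hβ : 0 < β) :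
    α • toNR p + β • toNR q ∉ span ℝ (toNR '' (s : Set (Fin d → ℤ))) := by
  intro hmem
  obtain ⟨j, hj, a, ha, hsum⟩ := hrel.exists_nonneg_sum_erase_eq (card_pos.1 (by omega)) hmem
  obtain ⟨r, t, hrt, hpair⟩ := card_eq_two.1 (by rw [card_erase_of_mem hj, hs] :
    (s.erase j).card = 2)
  have hsub : {r, t} ⊆ s := hpair ▸ erase_subset j s
  rw [hpair, sum_pair hrt] at hsum
  exact H.smul_add_smul_ne_smul_add_smul hp hq (hrel.subset_genSet (hsub (by simp)))
    (hrel.subset_genSet (hsub (by simp))) (fun h => hps (hsub h)) (fun h => hqs (hsub h))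
    hα hβ.le (ha r (hsub (by simp))) (ha t (hsub (by simp))) hsum.symm

lemma toNR_notMem_span (H : F.IsTwoNeighborly) {s : Finset (Fin d → ℤ)}
    {l : (Fin d → ℤ) → ℝ} (hrel : F.IsPositiveRelation s l) (hs : s.card = 4)
    {E : Fin d → ℤ} (hE : E ∈ F.genSet) (hEs : E ∉ s) :
    toNR E ∉ span ℝ (toNR '' (s : Set (Fin d → ℤ))) := by
  intro hmem
  obtain ⟨D, hD, a, ha, hEa⟩ := hrel.exists_nonneg_sum_erase_eq (card_pos.1 (by omega)) hmem
  have hlD : ∑ x ∈ s.erase D, l x • toNR x = -(l D • toNR D) :=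
    eq_neg_of_add_eq_zero_left (by rw [sum_erase_add _ _ hD, hrel.sum_smul_eq_zero])
  -- `E` lies in the cone over `s.erase D`; pushing it along `D` until a second coefficient
  -- vanishes lands in the cone over two generators `B`, `C`, while staying in the cone over `E, D`.
  obtain ⟨K, hK, τ, hτK, hτ, hsum⟩ := (s.erase D).exists_sum_smul_eq_add_sum_erase
    (card_pos.1 (by rw [card_erase_of_mem hD]; omega))
    (fun x hx => hrel.pos x (mem_of_mem_erase hx)) a toNR
  have hτ0 : 0 ≤ τ :=
    (mul_nonneg_iff_of_pos_right (hrel.pos K (mem_of_mem_erase hK))).1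
      (hτK ▸ ha K (mem_of_mem_erase hK))
  obtain ⟨B, C, hBC, hpair⟩ := card_eq_two.1 (by
    rw [card_erase_of_mem hK, card_erase_of_mem hD, hs] : ((s.erase D).erase K).card = 2)
  have hsub : {B, C} ⊆ s.erase D := hpair ▸ erase_subset K _
  rw [hEa, hlD, hpair, sum_pair hBC] at hsum
  have hgen : ∀ x ∈ ({B, C} : Finset (Fin d → ℤ)), x ∈ F.genSet := fun x hx =>
    hrel.subset_genSet (mem_of_mem_erase (hsub hx))
  refine H.smul_add_smul_ne_smul_add_smul hE (hrel.subset_genSet hD) (hgen B (by simp))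
    (hgen C (by simp)) (fun h => hEs (mem_of_mem_erase (hsub h)))
    (fun h => notMem_erase D s (hsub h)) one_pos (mul_nonneg hτ0 (hrel.pos D hD).le)
    (sub_nonneg.2 (hτ B (hsub (by simp)))) (sub_nonneg.2 (hτ C (hsub (by simp)))) ?_
  rw [hsum]
  module

end Fan.IsTwoNeighborly

theorem Fan.IsTwoNeighborly.card_le_four {F : Fan 3} (H : F.IsTwoNeighborly)
    (hC : F.IsComplete) (hN : F.IsNonsingular) {G : Finset (Fin 3 → ℤ)}
    (hG : (G : Set (Fin 3 → ℤ)) = F.genSet) : G.card ≤ 4 := by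
  by_contra! hG5
  obtain ⟨s, l, hrel, hrank⟩ := F.exists_isPositiveRelation hC hN
    (hG ▸ Finset.coe_nonempty.2 (Finset.card_pos.1 (by omega)))
  have hs3 := H.three_le_card hrel (Finset.card_pos.1 (by omega))
  have hs4 := (span ℝ (toNR '' (s : Set (Fin 3 → ℤ)))).finrank_le
  rw [finrank_fin_fun] at hs4
  obtain hs | hs : s.card = 3 ∨ s.card = 4 := by omega
  · obtain ⟨p, hp, q, hq, hpW, hqW, α, β, hα, hβ, hmem⟩ :=
      F.exists_smul_add_smul_mem_of_finrank_add_one hC hN _ (hrank.trans hs)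
    exact H.smul_add_smul_notMem_span hrel hs hp hq (fun h => hpW (subset_span ⟨p, h, rfl⟩))
      (fun h => hqW (subset_span ⟨q, h, rfl⟩)) hα hβ hmem
  · have htop : span ℝ (toNR '' (s : Set (Fin 3 → ℤ))) = ⊤ :=
      eq_top_of_finrank_eq (by rw [finrank_fin_fun]; omega)
    obtain ⟨E, hEG, hEs⟩ := Finset.not_subset.1 fun h : G ⊆ s => by
      have := Finset.card_le_card h
      omega
    exact H.toNR_notMem_span hrel hs (hG ▸ hEG) hEs (htop ▸ mem_top)

/-- A Fano fan of rank 3 with Picard number at least 2 has a primitive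
collection of cardinality 2. -/
theorem exists_card_two_primitiveCollection_dim3 (F : Fan 3) (hF : F.IsFanoFan)
    (G : Finset (Fin 3 → ℤ)) (hG : (↑G : Set (Fin 3 → ℤ)) = F.genSet)
    (hρ : 5 ≤ G.card) :
    ∃ P : Finset (Fin 3 → ℤ), F.IsPrimitiveCollection P ∧ P.card = 2 := by
  by_contra! h
  have H : F.IsTwoNeighborly := fun a ha b hb hab => by_contra fun hC =>
    h _ (F.isPrimitiveCollection_pair ha hb hab hC) (Finset.card_pair hab)
  have := H.card_le_four hF.1 hF.2.1 hG
  omega
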